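/- Let d ≥ 1 and let F : ℝ^d → ℝ^d be continuous with sup_{y ∈ ℝ^d} ‖F(y) − y‖ < ∞. Then the (set-valued) inverse of F is outer semi-continuous: for every x ∈ ℝ^d and every ε > 0 there exists δ > 0 such that F⁻¹(B(x,δ)) ⊆ F⁻¹({x}) + B(0,ε), where F⁻¹(S) = {y : F(y) ∈ S}. -/

import Mathlib

/-!
A continuous map at bounded distance from the identity of a proper metric space sends
cobounded sets to cobounded sets, hence is a proper map, hence is closed. For a closed map `F`
and an open `U ⊇ F⁻¹{x}`, the complement of `F(Uᶜ)` is an open neighbourhood of `x`, and any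
ball `B(x, δ)` inside it has `F⁻¹(B(x, δ)) ⊆ U`. Apply this to `U = F⁻¹{x} + B(0, ε)`.
-/

open scoped Pointwise
noncomputable section

open Filter Metric Bornology

theorem tendsto_cobounded_of_dist_le {α : Type*} [PseudoMetricSpace α] {f : α → α} {C : ℝ}
    (hf : ∀ y, dist (f y) y ≤ C) : Tendsto f (cobounded α) (cobounded α) := by
  rcases isEmpty_or_nonempty α with _ | ⟨⟨c⟩⟩
  · exact tendsto_of_isEmpty
  refine (tendsto_comap_iff.mpr ?_).mono_right (comap_dist_left_atTop c).le
  refine tendsto_atTop_mono (fun y ↦ ?_)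
    (tendsto_atTop_add_const_right _ (-C) (tendsto_dist_left_cobounded_atTop c))
  have := dist_triangle c (f y) y
  have := hf y
  simp only [Function.comp_apply]
  linarith

theorem isProperMap_of_dist_le {α : Type*} [MetricSpace α] [ProperSpace α] {f : α → α} {C : ℝ}
    (hf : Continuous f) (hC : ∀ y, dist (f y) y ≤ C) : IsProperMap f := by
  rw [isProperMap_iff_tendsto_cocompact, ← cobounded_eq_cocompact]
  exact ⟨hf, tendsto_cobounded_of_dist_le hC⟩

theorem IsClosedMap.exists_preimage_ball_subset {X Y : Type*} [TopologicalSpace X]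
    [PseudoMetricSpace Y] {f : X → Y} (hf : IsClosedMap f) {U : Set X} (hU : IsOpen U) {y : Y}
    (hyU : f ⁻¹' {y} ⊆ U) : ∃ δ > 0, f ⁻¹' ball y δ ⊆ U := by
  have hy : y ∈ (f '' Uᶜ)ᶜ := by
    rintro ⟨x, hxU, rfl⟩
    exact hxU (hyU rfl)
  obtain ⟨δ, hδ, hball⟩ := isOpen_iff.mp (hf _ hU.isClosed_compl).isOpen_compl y hy
  exact ⟨δ, hδ, fun x hx ↦ by_contra fun hxU ↦ hball hx ⟨x, hxU, rfl⟩⟩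

theorem stmt18 (d : ℕ)
    (F : EuclideanSpace ℝ (Fin d) → EuclideanSpace ℝ (Fin d))
    (hF : Continuous F)
    (hbd : ∃ C : ℝ, ∀ y, ‖F y - y‖ ≤ C) :
    ∀ x : EuclideanSpace ℝ (Fin d), ∀ ε : ℝ, 0 < ε →
      ∃ δ : ℝ, 0 < δ ∧
        F ⁻¹' (Metric.ball x δ) ⊆
          F ⁻¹' {x} + Metric.ball (0 : EuclideanSpace ℝ (Fin d)) ε := by
  intro x ε hε
  obtain ⟨C, hC⟩ := hbd
  have hproper : IsProperMap F :=
    isProperMap_of_dist_le hF fun y ↦ (dist_eq_norm _ _).trans_le (hC y)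
  exact hproper.isClosedMap.exists_preimage_ball_subset isOpen_ball.add_left
    (Set.subset_add_left _ (mem_ball_self hε))
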